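/- Let M → X ← N, N → Y ← L, and L → Z ← O be three composable cospans of finite sets, and let [u] be a point of the iterated pushout X ⊔_N Y ⊔_L Z. Then b₁([u]; X ⊔_N Y, Z) + Σ_{[v] ∈ X ⊔_N Y mapping to [u]} b₁([v]; X, Y) = |(N ⊔ L → X ⊔_N Y ⊔_L Z)^{-1}([u])| − |(X ⊔ Y ⊔ Z → X ⊔_N Y ⊔_L Z)^{-1}([u])| + 1, and likewise b₁([u]; X, Y ⊔_L Z) + Σ_{[w] ∈ Y ⊔_L Z mapping to [u]} b₁([w]; Y, Z) equals the same quantity; in particular the two iterated weighted compositions agree. -/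
import Mathlib


open Function


open Function

section Helpers
variable {α β A B C : Type*}

/-- Decompose a subtype of a sum. -/
def sumPredEquiv (P : α ⊕ β → Prop) :
    {w : α ⊕ β // P w} ≃ {a : α // P (Sum.inl a)} ⊕ {b : β // P (Sum.inr b)} where
  toFun w := match w with
    | ⟨Sum.inl a, h⟩ => Sum.inl ⟨a, h⟩
    | ⟨Sum.inr b, h⟩ => Sum.inr ⟨b, h⟩
  invFun w := match w with
    | Sum.inl ⟨a, h⟩ => ⟨Sum.inl a, h⟩
    | Sum.inr ⟨b, h⟩ => ⟨Sum.inr b, h⟩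
  left_inv := by rintro ⟨(a|b), h⟩ <;> rfl
  right_inv := by rintro (⟨a,h⟩|⟨b,h⟩) <;> rfl

/-- Fiber of a composite as a sigma of fibers. -/
def fiberSigmaEquiv (f : A → B) (g : B → C) (c : C) :
    {a : A // g (f a) = c} ≃ Σ b : {b : B // g b = c}, {a : A // f a = b.1} :=
  (Equiv.subtypeEquiv (q := fun y : Σ b : B, {a : A // f a = b} => g y.1 = c)
      (Equiv.sigmaFiberEquiv f).symm (fun _ => Iff.rfl)).trans
    (Equiv.subtypeSigmaEquiv (fun b : B => {a : A // f a = b}) (fun b : B => g b = c))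

@[simp] lemma fiberSigmaEquiv_snd (f : A → B) (g : B → C) (c : C)
    (a : {a : A // g (f a) = c}) : ((fiberSigmaEquiv f g c a).2 : A) = a.1 := by
  obtain ⟨a, ha⟩ := a; rfl

lemma card_le_card_quot_single {B : Type*} [Finite B] (p q : B) :
    Nat.card B ≤ Nat.card (Quot (fun x y => x = p ∧ y = q)) + 1 := by
  classical
  set s : B → B → Prop := fun x y => x = p ∧ y = q with hs
  have hf : ∀ x y, s x y → (if x = p then q else x) = (if y = p then q else y) := by
    rintro x y ⟨rfl, rfl⟩
    by_cases h : y = x <;> simp [h]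
  set g : Quot s → B := Quot.lift (fun x => if x = p then q else x) hf with hg
  have hinj : Function.Injective (fun x : {x : B // x ≠ p} => Quot.mk s x.1) := by
    intro x y hxy
    have := congrArg g hxy
    simp only [hg, Quot.lift_mk] at this
    rw [if_neg x.2, if_neg y.2] at this
    exact Subtype.ext this
  have h1 : Nat.card {x : B // x ≠ p} ≤ Nat.card (Quot s) :=
    Nat.card_le_card_of_injective _ hinj
  have h2 : Nat.card B ≤ Nat.card {x : B // x ≠ p} + 1 := by
    haveI := Fintype.ofFinite B
    simp only [Nat.card_eq_fintype_card]
    have h3 : Fintype.card {x : B // ¬ x = p} = Fintype.card B - Fintype.card {x : B // x = p} :=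
      Fintype.card_subtype_compl _
    rw [Fintype.card_subtype_eq] at h3
    have h4 : Fintype.card {x : B // x ≠ p} = Fintype.card {x : B // ¬ x = p} := rfl
    have h5 : 0 < Fintype.card B := Fintype.card_pos_iff.mpr ⟨p⟩
    omega
  omega

/-- Replacing a relation by a smaller one that differs by a single pair changes the
quotient cardinality by at most one. -/
lemma card_quot_le_card_quot_add_one {A : Type*} [Finite A] (r r' : A → A → Prop) (a b : A)
    (hr : r a b) (h1 : ∀ x y, r' x y → r x y) (h2 : ∀ x y, r x y → r' x y ∨ (x = a ∧ y = b)) :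
    Nat.card (Quot r') ≤ Nat.card (Quot r) + 1 := by
  set s : Quot r' → Quot r' → Prop :=
    fun p q => p = Quot.mk r' a ∧ q = Quot.mk r' b with hs
  have key : Nat.card (Quot s) = Nat.card (Quot r) := by
    refine Nat.card_congr ?_
    refine ⟨Quot.lift (Quot.lift (Quot.mk r) (fun x y hxy => Quot.sound (h1 x y hxy))) ?_,
      Quot.lift (fun x => Quot.mk s (Quot.mk r' x)) ?_, ?_, ?_⟩
    · rintro p q ⟨rfl, rfl⟩
      exact Quot.sound hr
    · intro x y hxy
      rcases h2 x y hxy with h | ⟨rfl, rfl⟩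
      · exact congrArg _ (Quot.sound h)
      · exact Quot.sound ⟨rfl, rfl⟩
    · intro p
      induction p using Quot.ind with
      | mk q => induction q using Quot.ind with
        | mk x => rfl
    · intro p
      induction p using Quot.ind with
      | mk x => rfl
  have := card_le_card_quot_single (Quot.mk r' a) (Quot.mk r' b)
  rw [← hs] at this
  omega

/-- A finite type has at most `#edges + #classes` elements. -/
lemma card_le_edges_add_card_quot {A : Type*} [Finite A] (r : A → A → Prop) :
    Nat.card A ≤ Nat.card {p : A × A // r p.1 p.2} + Nat.card (Quot r) := by
  classical
  generalize h : Nat.card {p : A × A // r p.1 p.2} = n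
  induction n generalizing r with
  | zero =>
    have he : IsEmpty {p : A × A // r p.1 p.2} := by
      rcases Nat.card_eq_zero.1 h with h' | h'
      · exact h'
      · exact absurd h' (by exact fun h'' => (Finite.not_infinite inferInstance h''))
    have hno : ∀ x y : A, ¬ r x y := fun x y hxy => he.false ⟨(x, y), hxy⟩
    have : Nat.card (Quot r) = Nat.card A := by
      refine Nat.card_congr ?_
      exact ⟨Quot.lift id (fun x y hxy => absurd hxy (hno x y)), Quot.mk r,
        fun p => by induction p using Quot.ind with | mk x => rfl, fun x => rfl⟩
    omega
  | succ n ih =>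
    have hne : Nonempty {p : A × A // r p.1 p.2} := by
      apply Nat.card_pos_iff.mp (by omega) |>.1
    obtain ⟨⟨⟨a, b⟩, hab⟩⟩ := hne
    set r' : A → A → Prop := fun x y => r x y ∧ (x, y) ≠ (a, b) with hr'
    have hcard' : Nat.card {p : A × A // r' p.1 p.2} = n := by
      haveI := Fintype.ofFinite (A × A)
      have e1 : {p : A × A // r' p.1 p.2} ≃ {q : {p : A × A // r p.1 p.2} // ¬ q.1 = (a, b)} :=
        ⟨fun p => ⟨⟨p.1, p.2.1⟩, p.2.2⟩, fun q => ⟨q.1.1, q.1.2, q.2⟩,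
          fun p => rfl, fun q => rfl⟩
      haveI := Fintype.ofFinite {p : A × A // r p.1 p.2}
      have e2 : Nat.card {q : {p : A × A // r p.1 p.2} // ¬ q.1 = (a, b)}
          = Nat.card {q : {p : A × A // r p.1 p.2} // ¬ q = ⟨(a, b), hab⟩} :=
        Nat.card_congr (Equiv.subtypeEquivRight (fun q => by
          simp [Subtype.ext_iff]))
      have h3 : Fintype.card {q : {p : A × A // r p.1 p.2} // ¬ q = ⟨(a, b), hab⟩}
          = Fintype.card {p : A × A // r p.1 p.2}
            - Fintype.card {q : {p : A × A // r p.1 p.2} // q = ⟨(a, b), hab⟩} :=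
        Fintype.card_subtype_compl _
      rw [Fintype.card_subtype_eq] at h3
      have h4 : Nat.card {p : A × A // r p.1 p.2} = Fintype.card {p : A × A // r p.1 p.2} :=
        Nat.card_eq_fintype_card
      have h5 : Nat.card {p : A × A // r' p.1 p.2}
          = Fintype.card {q : {p : A × A // r p.1 p.2} // ¬ q = ⟨(a, b), hab⟩} := by
        rw [Nat.card_congr e1, e2, Nat.card_eq_fintype_card]
      rw [h4] at h
      omega
    have hq : Nat.card (Quot r') ≤ Nat.card (Quot r) + 1 :=
      card_quot_le_card_quot_add_one r r' a b hab (fun x y h => h.1)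
        (fun x y h => by
          by_cases hxy : (x, y) = (a, b)
          · exact Or.inr ⟨congrArg Prod.fst hxy, congrArg Prod.snd hxy⟩
          · exact Or.inl ⟨h, hxy⟩)
    have := ih r' hcard'
    omega

/-- Each fiber of `Quot.mk` is "connected": its size is at most the number of
relation pairs starting in it, plus one. -/
lemma card_fiber_le_card_rel_add_one {A : Type*} [Finite A] (r : A → A → Prop) (u : Quot r) :
    Nat.card {a : A // Quot.mk r a = u}
      ≤ Nat.card {p : A × A // r p.1 p.2 ∧ Quot.mk r p.1 = u} + 1 := by
  classical
  set S := {a : A // Quot.mk r a = u} with hS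
  set rS : S → S → Prop := fun x y => r x.1 y.1 with hrS
  have hsub : ∀ p q : Quot rS, p = q := by
    have aux : ∀ x y : A, Relation.EqvGen r x y → ∀ (hx : Quot.mk r x = u) (hy : Quot.mk r y = u),
        Quot.mk rS ⟨x, hx⟩ = Quot.mk rS ⟨y, hy⟩ := by
      intro x y h
      induction h with
      | rel x y hxy => intro hx hy; exact Quot.sound hxy
      | refl x => intro hx hy; rfl
      | symm x y h ih => intro hx hy; exact (ih hy hx).symm
      | trans x w y h1 h2 ih1 ih2 =>
        intro hx hy
        have hw : Quot.mk r w = u := (Quot.eqvGen_sound h1).symm.trans hx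
        exact (ih1 hx hw).trans (ih2 hw hy)
    intro p q
    induction p using Quot.ind with
    | mk x => induction q using Quot.ind with
      | mk y =>
        exact aux x.1 y.1 (Quot.eqvGen_exact (x.2.trans y.2.symm)) x.2 y.2
  have hq1 : Nat.card (Quot rS) ≤ 1 := by
    haveI : Subsingleton (Quot rS) := ⟨hsub⟩
    rcases isEmpty_or_nonempty (Quot rS) with h | h
    · simp [Nat.card_of_isEmpty]
    · haveI : Unique (Quot rS) := uniqueOfSubsingleton h.some
      simp [Nat.card_unique]
  have hinj : Function.Injective
      (fun p : {p : S × S // rS p.1 p.2} =>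
        (⟨(p.1.1.1, p.1.2.1), p.2, p.1.1.2⟩ : {p : A × A // r p.1 p.2 ∧ Quot.mk r p.1 = u})) := by
    rintro ⟨⟨x, y⟩, h⟩ ⟨⟨x', y'⟩, h'⟩ hh
    simp only [Subtype.mk.injEq, Prod.mk.injEq] at hh
    exact Subtype.ext (Prod.ext (Subtype.ext hh.1) (Subtype.ext hh.2))
  have hedge : Nat.card {p : S × S // rS p.1 p.2}
      ≤ Nat.card {p : A × A // r p.1 p.2 ∧ Quot.mk r p.1 = u} :=
    Nat.card_le_card_of_injective _ hinj
  have := card_le_edges_add_card_quot rS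
  omega

/-- Specialization: if `r` is generated by an index type `E` via `e ↦ (f e, g e)`,
then each fiber of the quotient has at most `#(E`-fiber`) + 1` elements. -/
lemma card_fiber_le_index {A E : Type*} [Finite A] [Finite E] (f g : E → A)
    {r : A → A → Prop} (hr : ∀ a b, r a b ↔ ∃ e, a = f e ∧ b = g e) (u : Quot r) :
    Nat.card {a : A // Quot.mk r a = u}
      ≤ Nat.card {e : E // Quot.mk r (f e) = u} + 1 := by
  have hsurj : Function.Surjective
      (fun e : {e : E // Quot.mk r (f e) = u} =>
        (⟨(f e.1, g e.1), (hr _ _).2 ⟨e.1, rfl, rfl⟩, e.2⟩ :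
          {p : A × A // r p.1 p.2 ∧ Quot.mk r p.1 = u})) := by
    rintro ⟨⟨a, b⟩, hab, hu⟩
    obtain ⟨e, rfl, rfl⟩ := (hr a b).1 hab
    exact ⟨⟨e, hu⟩, rfl⟩
  have := Nat.card_le_card_of_surjective _ hsurj
  have := card_fiber_le_card_rel_add_one r u
  omega

end Helpers

section Helpers2
variable {A B C : Type*}

lemma nat_card_sigma {I : Type*} [Fintype I] (F : I → Type*) [∀ i, Finite (F i)] :
    Nat.card (Σ i, F i) = ∑ i : I, Nat.card (F i) := by
  letI : ∀ i, Fintype (F i) := fun i => Fintype.ofFinite _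
  rw [Nat.card_eq_fintype_card, Fintype.card_sigma]
  exact Finset.sum_congr rfl fun i _ => Nat.card_eq_fintype_card.symm

lemma card_fiber_sum [Finite A] (f : A → B) (g : B → C) (c : C)
    [Fintype {b : B // g b = c}] :
    Nat.card {a : A // g (f a) = c}
      = ∑ b : {b : B // g b = c}, Nat.card {a : A // f a = b.1} := by
  rw [Nat.card_congr (fiberSigmaEquiv f g c)]
  exact nat_card_sigma _

lemma sum_fiber_sum {M : Type*} [AddCommMonoid M] [Finite A] (f : A → B) (g : B → C)
    (c : C) [Fintype {b : B // g b = c}] (lab : A → M) :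
    ∑ b : {b : B // g b = c}, ∑ᶠ a : {a : A // f a = b.1}, lab a.1
      = ∑ᶠ a : {a : A // g (f a) = c}, lab a.1 := by
  letI : Fintype {a : A // g (f a) = c} := Fintype.ofFinite _
  letI : ∀ b : {b : B // g b = c}, Fintype {a : A // f a = b.1} := fun b => Fintype.ofFinite _
  rw [finsum_eq_sum_of_fintype]
  calc ∑ b : {b : B // g b = c}, ∑ᶠ a : {a : A // f a = b.1}, lab a.1
      = ∑ b : {b : B // g b = c}, ∑ a : {a : A // f a = b.1}, lab a.1 :=
        Finset.sum_congr rfl fun b _ => finsum_eq_sum_of_fintype _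
    _ = ∑ p : Σ b : {b : B // g b = c}, {a : A // f a = b.1}, lab p.2.1 := by
        rw [← Finset.univ_sigma_univ, Finset.sum_sigma]
    _ = ∑ a : {a : A // g (f a) = c}, lab a.1 := by
        rw [← Equiv.sum_comp (fiberSigmaEquiv f g c) (fun p => lab p.2.1)]
        exact Finset.sum_congr rfl fun a _ => congrArg lab (fiberSigmaEquiv_snd f g c a)

end Helpers2

noncomputable section

namespace Stmt1

/-!
Statement 1: associativity of the weighted composition of cospans of finite sets.
We consider three composable cospans `M → X ← N`, `N → Y ← L`, `L → Z ← O`;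
only the four "inner" legs `rX : N → X`, `lY : N → Y`, `rY : L → Y`, `lZ : L → Z`
are relevant.  All pushouts are modelled as quotients `Quot` by the generating
relations, and `b₁([u]; X, Y) := |(N → X ⊔_N Y)⁻¹[u]| − |(X ⊔ Y → X ⊔_N Y)⁻¹[u]| + 1`
(a nonnegative number, written below using truncated subtraction as
`(|N-fibre| + 1) - |X ⊔ Y-fibre|`).
-/

variable {X Y Z N L : Type} [Finite X] [Finite Y] [Finite Z] [Finite N] [Finite L]

variable (rX : N → X) (lY : N → Y) (rY : L → Y) (lZ : L → Z)

/-- The relation generating the pushout `X ⊔_N Y`. -/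
def relXY : (X ⊕ Y) → (X ⊕ Y) → Prop := fun p q =>
  ∃ n : N, p = Sum.inl (rX n) ∧ q = Sum.inr (lY n)

/-- The relation generating the pushout `Y ⊔_L Z`. -/
def relYZ : (Y ⊕ Z) → (Y ⊕ Z) → Prop := fun p q =>
  ∃ l : L, p = Sum.inl (rY l) ∧ q = Sum.inr (lZ l)

/-- The relation generating the iterated pushout `X ⊔_N Y ⊔_L Z`. -/
def relT : (X ⊕ Y ⊕ Z) → (X ⊕ Y ⊕ Z) → Prop := fun p q =>
  (∃ n : N, p = Sum.inl (rX n) ∧ q = Sum.inr (Sum.inl (lY n))) ∨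
  (∃ l : L, p = Sum.inr (Sum.inl (rY l)) ∧ q = Sum.inr (Sum.inr (lZ l)))

/-- `b₁([v]; X, Y)`. -/
def b1XY (v : Quot (relXY rX lY)) : ℕ :=
  (Nat.card {n : N // Quot.mk (relXY rX lY) (Sum.inl (rX n)) = v} + 1)
    - Nat.card {w : X ⊕ Y // Quot.mk (relXY rX lY) w = v}

/-- `b₁([w]; Y, Z)`. -/
def b1YZ (v : Quot (relYZ rY lZ)) : ℕ :=
  (Nat.card {l : L // Quot.mk (relYZ rY lZ) (Sum.inl (rY l)) = v} + 1)
    - Nat.card {w : Y ⊕ Z // Quot.mk (relYZ rY lZ) w = v}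

/-- The canonical map `X ⊔_N Y → X ⊔_N Y ⊔_L Z`. -/
def toTXY : Quot (relXY rX lY) → Quot (relT rX lY rY lZ) :=
  Quot.lift (fun w => Quot.mk _ (Sum.elim Sum.inl (fun y => Sum.inr (Sum.inl y)) w))
    (by rintro _ _ ⟨n, rfl, rfl⟩; exact Quot.sound (Or.inl ⟨n, rfl, rfl⟩))

/-- The canonical map `Y ⊔_L Z → X ⊔_N Y ⊔_L Z`. -/
def toTYZ : Quot (relYZ rY lZ) → Quot (relT rX lY rY lZ) :=
  Quot.lift (fun w => Quot.mk _ ((Sum.inr w : X ⊕ Y ⊕ Z)))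
    (by rintro _ _ ⟨l, rfl, rfl⟩; exact Quot.sound (Or.inr ⟨l, rfl, rfl⟩))

/-- `b₁([u]; X ⊔_N Y, Z)`. -/
def b1XY_Z (u : Quot (relT rX lY rY lZ)) : ℕ :=
  (Nat.card {l : L // Quot.mk (relT rX lY rY lZ) (Sum.inr (Sum.inl (rY l))) = u} + 1)
    - Nat.card {w : Quot (relXY rX lY) ⊕ Z //
        Sum.elim (toTXY rX lY rY lZ)
          (fun z => Quot.mk (relT rX lY rY lZ) (Sum.inr (Sum.inr z))) w = u}

/-- `b₁([u]; X, Y ⊔_L Z)`. -/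
def b1X_YZ (u : Quot (relT rX lY rY lZ)) : ℕ :=
  (Nat.card {n : N // Quot.mk (relT rX lY rY lZ) (Sum.inl (rX n)) = u} + 1)
    - Nat.card {w : X ⊕ Quot (relYZ rY lZ) //
        Sum.elim (fun x => Quot.mk (relT rX lY rY lZ) (Sum.inl x))
          (toTYZ rX lY rY lZ) w = u}

/-- `|(N ⊔ L → X ⊔_N Y ⊔_L Z)⁻¹ [u]|`. -/
def glueCount (u : Quot (relT rX lY rY lZ)) : ℕ :=
  Nat.card {p : N ⊕ L //
    Sum.elim (fun n => Quot.mk (relT rX lY rY lZ) (Sum.inl (rX n)))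
      (fun l => Quot.mk (relT rX lY rY lZ) (Sum.inr (Sum.inl (rY l)))) p = u}

/-- `|(X ⊔ Y ⊔ Z → X ⊔_N Y ⊔_L Z)⁻¹ [u]|`. -/
def totalCount (u : Quot (relT rX lY rY lZ)) : ℕ :=
  Nat.card {w : X ⊕ Y ⊕ Z // Quot.mk (relT rX lY rY lZ) w = u}

section Labels

variable {Mo : Type} [AddCommMonoid Mo] (α : Mo)
variable (labX : X → Mo) (labY : Y → Mo) (labZ : Z → Mo)

/-- The label `(l ∗ l')` of a point of `X ⊔_N Y`. -/
def compLabXY (v : Quot (relXY rX lY)) : Mo :=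
  (∑ᶠ x : {x : X // Quot.mk (relXY rX lY) (Sum.inl x) = v}, labX x.1)
  + (∑ᶠ y : {y : Y // Quot.mk (relXY rX lY) (Sum.inr y) = v}, labY y.1)
  + b1XY rX lY v • α

/-- The label `(l' ∗ l'')` of a point of `Y ⊔_L Z`. -/
def compLabYZ (v : Quot (relYZ rY lZ)) : Mo :=
  (∑ᶠ y : {y : Y // Quot.mk (relYZ rY lZ) (Sum.inl y) = v}, labY y.1)
  + (∑ᶠ z : {z : Z // Quot.mk (relYZ rY lZ) (Sum.inr z) = v}, labZ z.1)
  + b1YZ rY lZ v • α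

/-- The label `((l ∗ l') ∗ l'')` of a point of `X ⊔_N Y ⊔_L Z`. -/
def compLabLeft (u : Quot (relT rX lY rY lZ)) : Mo :=
  (∑ᶠ v : {v : Quot (relXY rX lY) // toTXY rX lY rY lZ v = u},
      compLabXY rX lY α labX labY v.1)
  + (∑ᶠ z : {z : Z // Quot.mk (relT rX lY rY lZ) (Sum.inr (Sum.inr z)) = u}, labZ z.1)
  + b1XY_Z rX lY rY lZ u • α

/-- The label `(l ∗ (l' ∗ l''))` of a point of `X ⊔_N Y ⊔_L Z`. -/
def compLabRight (u : Quot (relT rX lY rY lZ)) : Mo :=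
  (∑ᶠ x : {x : X // Quot.mk (relT rX lY rY lZ) (Sum.inl x) = u}, labX x.1)
  + (∑ᶠ w : {w : Quot (relYZ rY lZ) // toTYZ rX lY rY lZ w = u},
      compLabYZ rY lZ α labY labZ w.1)
  + b1X_YZ rX lY rY lZ u • α

end Labels


/-- The relation presenting `X ⊔_N Y ⊔_L Z` as the pushout `(X ⊔_N Y) ⊔_L Z`. -/
def relQZ : (Quot (relXY rX lY) ⊕ Z) → (Quot (relXY rX lY) ⊕ Z) → Prop := fun p q =>
  ∃ l : L, p = Sum.inl (Quot.mk (relXY rX lY) (Sum.inr (rY l))) ∧ q = Sum.inr (lZ l)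

def phiL : Quot (relQZ rX lY rY lZ) → Quot (relT rX lY rY lZ) :=
  Quot.lift
    (Sum.elim (toTXY rX lY rY lZ)
      (fun z => Quot.mk (relT rX lY rY lZ) (Sum.inr (Sum.inr z))))
    (by rintro _ _ ⟨l, rfl, rfl⟩; exact Quot.sound (Or.inr ⟨l, rfl, rfl⟩))

def psiL : Quot (relT rX lY rY lZ) → Quot (relQZ rX lY rY lZ) :=
  Quot.lift
    (Sum.elim
      (fun x => Quot.mk (relQZ rX lY rY lZ) (Sum.inl (Quot.mk (relXY rX lY) (Sum.inl x))))
      (Sum.elim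
        (fun y => Quot.mk (relQZ rX lY rY lZ) (Sum.inl (Quot.mk (relXY rX lY) (Sum.inr y))))
        (fun z => Quot.mk (relQZ rX lY rY lZ) (Sum.inr z))))
    (by
      rintro _ _ (⟨n, rfl, rfl⟩ | ⟨l, rfl, rfl⟩)
      · exact congrArg (fun v => Quot.mk (relQZ rX lY rY lZ) (Sum.inl v))
          (Quot.sound ⟨n, rfl, rfl⟩)
      · exact Quot.sound ⟨l, rfl, rfl⟩)

lemma phiL_psiL (u : Quot (relT rX lY rY lZ)) :
    phiL rX lY rY lZ (psiL rX lY rY lZ u) = u := by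
  induction u using Quot.ind with
  | mk w => rcases w with x | y | z <;> rfl

lemma psiL_phiL (p : Quot (relQZ rX lY rY lZ)) :
    psiL rX lY rY lZ (phiL rX lY rY lZ p) = p := by
  induction p using Quot.ind with
  | mk w =>
    rcases w with v | z
    · induction v using Quot.ind with
      | mk w' => rcases w' with x | y <;> rfl
    · rfl

/-- The relation presenting `X ⊔_N Y ⊔_L Z` as the pushout `X ⊔_N (Y ⊔_L Z)`. -/
def relXQ : (X ⊕ Quot (relYZ rY lZ)) → (X ⊕ Quot (relYZ rY lZ)) → Prop := fun p q =>
  ∃ n : N, p = Sum.inl (rX n) ∧ q = Sum.inr (Quot.mk (relYZ rY lZ) (Sum.inl (lY n)))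

def phiR : Quot (relXQ rX lY rY lZ) → Quot (relT rX lY rY lZ) :=
  Quot.lift
    (Sum.elim (fun x => Quot.mk (relT rX lY rY lZ) (Sum.inl x)) (toTYZ rX lY rY lZ))
    (by rintro _ _ ⟨n, rfl, rfl⟩; exact Quot.sound (Or.inl ⟨n, rfl, rfl⟩))

def psiR : Quot (relT rX lY rY lZ) → Quot (relXQ rX lY rY lZ) :=
  Quot.lift
    (Sum.elim
      (fun x => Quot.mk (relXQ rX lY rY lZ) (Sum.inl x))
      (Sum.elim
        (fun y => Quot.mk (relXQ rX lY rY lZ) (Sum.inr (Quot.mk (relYZ rY lZ) (Sum.inl y))))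
        (fun z => Quot.mk (relXQ rX lY rY lZ) (Sum.inr (Quot.mk (relYZ rY lZ) (Sum.inr z))))))
    (by
      rintro _ _ (⟨n, rfl, rfl⟩ | ⟨l, rfl, rfl⟩)
      · exact Quot.sound ⟨n, rfl, rfl⟩
      · exact congrArg (fun v => Quot.mk (relXQ rX lY rY lZ) (Sum.inr v))
          (Quot.sound ⟨l, rfl, rfl⟩))

lemma phiR_psiR (u : Quot (relT rX lY rY lZ)) :
    phiR rX lY rY lZ (psiR rX lY rY lZ u) = u := by
  induction u using Quot.ind with
  | mk w => rcases w with x | y | z <;> rfl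

lemma psiR_phiR (p : Quot (relXQ rX lY rY lZ)) :
    psiR rX lY rY lZ (phiR rX lY rY lZ p) = p := by
  induction p using Quot.ind with
  | mk w =>
    rcases w with x | v
    · rfl
    · induction v using Quot.ind with
      | mk w' => rcases w' with y | z <;> rfl

/-- Part 1 of the statement. -/
lemma part1 (u : Quot (relT rX lY rY lZ)) :
    b1XY_Z rX lY rY lZ u
        + ∑ᶠ v : {v : Quot (relXY rX lY) // toTXY rX lY rY lZ v = u}, b1XY rX lY v.1
      = (glueCount rX lY rY lZ u + 1) - totalCount rX lY rY lZ u := by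
  classical
  letI : Fintype {v : Quot (relXY rX lY) // toTXY rX lY rY lZ v = u} := Fintype.ofFinite _
  -- per-class inequalities in `X ⊔_N Y`
  have hcle : ∀ v : {v : Quot (relXY rX lY) // toTXY rX lY rY lZ v = u},
      Nat.card {w : X ⊕ Y // Quot.mk (relXY rX lY) w = v.1}
        ≤ Nat.card {n : N // Quot.mk (relXY rX lY) (Sum.inl (rX n)) = v.1} + 1 := fun v =>
    card_fiber_le_index (fun n => Sum.inl (rX n)) (fun n => Sum.inr (lY n))
      (fun a b => Iff.rfl) v.1
  have hcpos : ∀ v : {v : Quot (relXY rX lY) // toTXY rX lY rY lZ v = u},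
      1 ≤ Nat.card {w : X ⊕ Y // Quot.mk (relXY rX lY) w = v.1} := by
    intro v
    obtain ⟨w, hw⟩ := Quot.exists_rep v.1
    haveI : Nonempty {w : X ⊕ Y // Quot.mk (relXY rX lY) w = v.1} := ⟨⟨w, hw⟩⟩
    exact Nat.card_pos
  -- fibre decompositions
  have hApart : Nat.card {n : N // Quot.mk (relT rX lY rY lZ) (Sum.inl (rX n)) = u}
      = ∑ v : {v : Quot (relXY rX lY) // toTXY rX lY rY lZ v = u},
          Nat.card {n : N // Quot.mk (relXY rX lY) (Sum.inl (rX n)) = v.1} :=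
    card_fiber_sum (fun n : N => Quot.mk (relXY rX lY) (Sum.inl (rX n)))
      (toTXY rX lY rY lZ) u
  have hW : Nat.card {w : X ⊕ Y // toTXY rX lY rY lZ (Quot.mk (relXY rX lY) w) = u}
      = ∑ v : {v : Quot (relXY rX lY) // toTXY rX lY rY lZ v = u},
          Nat.card {w : X ⊕ Y // Quot.mk (relXY rX lY) w = v.1} :=
    card_fiber_sum (Quot.mk (relXY rX lY)) (toTXY rX lY rY lZ) u
  have hWsplit : Nat.card {w : X ⊕ Y // toTXY rX lY rY lZ (Quot.mk (relXY rX lY) w) = u}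
      = Nat.card {x : X // Quot.mk (relT rX lY rY lZ) (Sum.inl x) = u}
        + Nat.card {y : Y // Quot.mk (relT rX lY rY lZ) (Sum.inr (Sum.inl y)) = u} := by
    rw [Nat.card_congr (sumPredEquiv
      (fun w : X ⊕ Y => toTXY rX lY rY lZ (Quot.mk (relXY rX lY) w) = u)), Nat.card_sum]
    rfl
  have htotal : totalCount rX lY rY lZ u
      = Nat.card {x : X // Quot.mk (relT rX lY rY lZ) (Sum.inl x) = u}
        + Nat.card {y : Y // Quot.mk (relT rX lY rY lZ) (Sum.inr (Sum.inl y)) = u}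
        + Nat.card {z : Z // Quot.mk (relT rX lY rY lZ) (Sum.inr (Sum.inr z)) = u} := by
    have h1 : totalCount rX lY rY lZ u
        = Nat.card {x : X // Quot.mk (relT rX lY rY lZ) (Sum.inl x) = u}
          + Nat.card {w : Y ⊕ Z // Quot.mk (relT rX lY rY lZ) (Sum.inr w) = u} := by
      rw [totalCount, Nat.card_congr (sumPredEquiv
        (fun w : X ⊕ Y ⊕ Z => Quot.mk (relT rX lY rY lZ) w = u)), Nat.card_sum]
    have h2 : Nat.card {w : Y ⊕ Z // Quot.mk (relT rX lY rY lZ) (Sum.inr w) = u}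
        = Nat.card {y : Y // Quot.mk (relT rX lY rY lZ) (Sum.inr (Sum.inl y)) = u}
          + Nat.card {z : Z // Quot.mk (relT rX lY rY lZ) (Sum.inr (Sum.inr z)) = u} := by
      rw [Nat.card_congr (sumPredEquiv
        (fun w : Y ⊕ Z => Quot.mk (relT rX lY rY lZ) (Sum.inr w) = u)), Nat.card_sum]
    omega
  have hglue : glueCount rX lY rY lZ u
      = Nat.card {n : N // Quot.mk (relT rX lY rY lZ) (Sum.inl (rX n)) = u}
        + Nat.card {l : L // Quot.mk (relT rX lY rY lZ) (Sum.inr (Sum.inl (rY l))) = u} := by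
    rw [glueCount, Nat.card_congr (sumPredEquiv _), Nat.card_sum]
    rfl
  -- the `(X ⊔_N Y) ⊔ Z`-fibre of `u`
  have hQZsplit : Nat.card {w : Quot (relXY rX lY) ⊕ Z //
        Sum.elim (toTXY rX lY rY lZ)
          (fun z => Quot.mk (relT rX lY rY lZ) (Sum.inr (Sum.inr z))) w = u}
      = Nat.card {v : Quot (relXY rX lY) // toTXY rX lY rY lZ v = u}
        + Nat.card {z : Z // Quot.mk (relT rX lY rY lZ) (Sum.inr (Sum.inr z)) = u} := by
    rw [Nat.card_congr (sumPredEquiv _), Nat.card_sum]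
    rfl
  have hb1Z : b1XY_Z rX lY rY lZ u
      = (Nat.card {l : L // Quot.mk (relT rX lY rY lZ) (Sum.inr (Sum.inl (rY l))) = u} + 1)
        - (Nat.card {v : Quot (relXY rX lY) // toTXY rX lY rY lZ v = u}
            + Nat.card {z : Z // Quot.mk (relT rX lY rY lZ) (Sum.inr (Sum.inr z)) = u}) := by
    rw [b1XY_Z, hQZsplit]
  -- connectivity bound for the outer pushout
  have hDE : Nat.card {v : Quot (relXY rX lY) // toTXY rX lY rY lZ v = u}
        + Nat.card {z : Z // Quot.mk (relT rX lY rY lZ) (Sum.inr (Sum.inr z)) = u}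
      ≤ Nat.card {l : L // Quot.mk (relT rX lY rY lZ) (Sum.inr (Sum.inl (rY l))) = u} + 1 := by
    have key := card_fiber_le_index
      (fun l : L => (Sum.inl (Quot.mk (relXY rX lY) (Sum.inr (rY l))) : Quot (relXY rX lY) ⊕ Z))
      (fun l : L => (Sum.inr (lZ l) : Quot (relXY rX lY) ⊕ Z))
      (r := relQZ rX lY rY lZ) (fun a b => Iff.rfl) (psiL rX lY rY lZ u)
    have e2 : Nat.card {w : Quot (relXY rX lY) ⊕ Z //
          Sum.elim (toTXY rX lY rY lZ)
            (fun z => Quot.mk (relT rX lY rY lZ) (Sum.inr (Sum.inr z))) w = u}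
        = Nat.card {w : Quot (relXY rX lY) ⊕ Z //
            Quot.mk (relQZ rX lY rY lZ) w = psiL rX lY rY lZ u} := by
      refine Nat.card_congr (Equiv.subtypeEquivRight fun w => ⟨fun h => ?_, fun h => ?_⟩)
      · exact (psiL_phiL rX lY rY lZ (Quot.mk _ w)).symm.trans
          (congrArg (psiL rX lY rY lZ) h)
      · exact (congrArg (phiL rX lY rY lZ) h).trans (phiL_psiL rX lY rY lZ u)
    have e3 : Nat.card {l : L //
          Quot.mk (relQZ rX lY rY lZ)
            (Sum.inl (Quot.mk (relXY rX lY) (Sum.inr (rY l)))) = psiL rX lY rY lZ u}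
        = Nat.card {l : L //
            Quot.mk (relT rX lY rY lZ) (Sum.inr (Sum.inl (rY l))) = u} := by
      refine Nat.card_congr (Equiv.subtypeEquivRight fun l => ⟨fun h => ?_, fun h => ?_⟩)
      · exact (congrArg (phiL rX lY rY lZ) h).trans (phiL_psiL rX lY rY lZ u)
      · exact congrArg (psiL rX lY rY lZ) h
    rw [← e3, ← hQZsplit, e2]
    exact key
  -- the sum of the `b₁`'s over the fibre
  have hsum1 : (∑ᶠ v : {v : Quot (relXY rX lY) // toTXY rX lY rY lZ v = u}, b1XY rX lY v.1)
      = (∑ v : {v : Quot (relXY rX lY) // toTXY rX lY rY lZ v = u},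
          (Nat.card {n : N // Quot.mk (relXY rX lY) (Sum.inl (rX n)) = v.1} + 1))
        - ∑ v : {v : Quot (relXY rX lY) // toTXY rX lY rY lZ v = u},
            Nat.card {w : X ⊕ Y // Quot.mk (relXY rX lY) w = v.1} := by
    rw [finsum_eq_sum_of_fintype, ← Finset.sum_tsub_distrib _ (fun v _ => hcle v)]
    exact Finset.sum_congr rfl fun v _ => rfl
  have hsplitA : (∑ v : {v : Quot (relXY rX lY) // toTXY rX lY rY lZ v = u},
        (Nat.card {n : N // Quot.mk (relXY rX lY) (Sum.inl (rX n)) = v.1} + 1))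
      = (∑ v : {v : Quot (relXY rX lY) // toTXY rX lY rY lZ v = u},
          Nat.card {n : N // Quot.mk (relXY rX lY) (Sum.inl (rX n)) = v.1})
        + Nat.card {v : Quot (relXY rX lY) // toTXY rX lY rY lZ v = u} := by
    rw [Finset.sum_add_distrib, Finset.sum_const, smul_eq_mul, mul_one, Finset.card_univ,
      Nat.card_eq_fintype_card]
  have hle2 : (∑ v : {v : Quot (relXY rX lY) // toTXY rX lY rY lZ v = u},
        Nat.card {w : X ⊕ Y // Quot.mk (relXY rX lY) w = v.1})
      ≤ ∑ v : {v : Quot (relXY rX lY) // toTXY rX lY rY lZ v = u},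
          (Nat.card {n : N // Quot.mk (relXY rX lY) (Sum.inl (rX n)) = v.1} + 1) :=
    Finset.sum_le_sum (fun v _ => hcle v)
  rw [hb1Z]
  rw [hsum1]
  rw [htotal]
  rw [hglue]
  rw [hApart]
  rw [hsplitA]
  rw [hsplitA] at hle2
  rw [hWsplit] at hW
  omega

/-- Part 2 of the statement. -/
lemma part2 (u : Quot (relT rX lY rY lZ)) :
    b1X_YZ rX lY rY lZ u
        + ∑ᶠ w : {w : Quot (relYZ rY lZ) // toTYZ rX lY rY lZ w = u}, b1YZ rY lZ w.1
      = (glueCount rX lY rY lZ u + 1) - totalCount rX lY rY lZ u := by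
  classical
  letI : Fintype {w : Quot (relYZ rY lZ) // toTYZ rX lY rY lZ w = u} := Fintype.ofFinite _
  have hcle : ∀ w : {w : Quot (relYZ rY lZ) // toTYZ rX lY rY lZ w = u},
      Nat.card {p : Y ⊕ Z // Quot.mk (relYZ rY lZ) p = w.1}
        ≤ Nat.card {l : L // Quot.mk (relYZ rY lZ) (Sum.inl (rY l)) = w.1} + 1 := fun w =>
    card_fiber_le_index (fun l => Sum.inl (rY l)) (fun l => Sum.inr (lZ l))
      (fun a b => Iff.rfl) w.1
  have hBpart : Nat.card {l : L // Quot.mk (relT rX lY rY lZ) (Sum.inr (Sum.inl (rY l))) = u}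
      = ∑ w : {w : Quot (relYZ rY lZ) // toTYZ rX lY rY lZ w = u},
          Nat.card {l : L // Quot.mk (relYZ rY lZ) (Sum.inl (rY l)) = w.1} :=
    card_fiber_sum (fun l : L => Quot.mk (relYZ rY lZ) (Sum.inl (rY l)))
      (toTYZ rX lY rY lZ) u
  have hW : Nat.card {p : Y ⊕ Z // toTYZ rX lY rY lZ (Quot.mk (relYZ rY lZ) p) = u}
      = ∑ w : {w : Quot (relYZ rY lZ) // toTYZ rX lY rY lZ w = u},
          Nat.card {p : Y ⊕ Z // Quot.mk (relYZ rY lZ) p = w.1} :=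
    card_fiber_sum (Quot.mk (relYZ rY lZ)) (toTYZ rX lY rY lZ) u
  have hWsplit : Nat.card {p : Y ⊕ Z // toTYZ rX lY rY lZ (Quot.mk (relYZ rY lZ) p) = u}
      = Nat.card {y : Y // Quot.mk (relT rX lY rY lZ) (Sum.inr (Sum.inl y)) = u}
        + Nat.card {z : Z // Quot.mk (relT rX lY rY lZ) (Sum.inr (Sum.inr z)) = u} := by
    rw [Nat.card_congr (sumPredEquiv
      (fun p : Y ⊕ Z => toTYZ rX lY rY lZ (Quot.mk (relYZ rY lZ) p) = u)), Nat.card_sum]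
    rfl
  have htotal : totalCount rX lY rY lZ u
      = Nat.card {x : X // Quot.mk (relT rX lY rY lZ) (Sum.inl x) = u}
        + Nat.card {y : Y // Quot.mk (relT rX lY rY lZ) (Sum.inr (Sum.inl y)) = u}
        + Nat.card {z : Z // Quot.mk (relT rX lY rY lZ) (Sum.inr (Sum.inr z)) = u} := by
    have h1 : totalCount rX lY rY lZ u
        = Nat.card {x : X // Quot.mk (relT rX lY rY lZ) (Sum.inl x) = u}
          + Nat.card {w : Y ⊕ Z // Quot.mk (relT rX lY rY lZ) (Sum.inr w) = u} := by
      rw [totalCount, Nat.card_congr (sumPredEquiv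
        (fun w : X ⊕ Y ⊕ Z => Quot.mk (relT rX lY rY lZ) w = u)), Nat.card_sum]
    have h2 : Nat.card {w : Y ⊕ Z // Quot.mk (relT rX lY rY lZ) (Sum.inr w) = u}
        = Nat.card {y : Y // Quot.mk (relT rX lY rY lZ) (Sum.inr (Sum.inl y)) = u}
          + Nat.card {z : Z // Quot.mk (relT rX lY rY lZ) (Sum.inr (Sum.inr z)) = u} := by
      rw [Nat.card_congr (sumPredEquiv
        (fun w : Y ⊕ Z => Quot.mk (relT rX lY rY lZ) (Sum.inr w) = u)), Nat.card_sum]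
    omega
  have hglue : glueCount rX lY rY lZ u
      = Nat.card {n : N // Quot.mk (relT rX lY rY lZ) (Sum.inl (rX n)) = u}
        + Nat.card {l : L // Quot.mk (relT rX lY rY lZ) (Sum.inr (Sum.inl (rY l))) = u} := by
    rw [glueCount, Nat.card_congr (sumPredEquiv _), Nat.card_sum]
    rfl
  have hXQsplit : Nat.card {w : X ⊕ Quot (relYZ rY lZ) //
        Sum.elim (fun x => Quot.mk (relT rX lY rY lZ) (Sum.inl x))
          (toTYZ rX lY rY lZ) w = u}
      = Nat.card {x : X // Quot.mk (relT rX lY rY lZ) (Sum.inl x) = u}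
        + Nat.card {w : Quot (relYZ rY lZ) // toTYZ rX lY rY lZ w = u} := by
    rw [Nat.card_congr (sumPredEquiv _), Nat.card_sum]
    rfl
  have hb1R : b1X_YZ rX lY rY lZ u
      = (Nat.card {n : N // Quot.mk (relT rX lY rY lZ) (Sum.inl (rX n)) = u} + 1)
        - (Nat.card {x : X // Quot.mk (relT rX lY rY lZ) (Sum.inl x) = u}
            + Nat.card {w : Quot (relYZ rY lZ) // toTYZ rX lY rY lZ w = u}) := by
    rw [b1X_YZ, hXQsplit]
  have hFD : Nat.card {x : X // Quot.mk (relT rX lY rY lZ) (Sum.inl x) = u}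
        + Nat.card {w : Quot (relYZ rY lZ) // toTYZ rX lY rY lZ w = u}
      ≤ Nat.card {n : N // Quot.mk (relT rX lY rY lZ) (Sum.inl (rX n)) = u} + 1 := by
    have key := card_fiber_le_index
      (fun n : N => (Sum.inl (rX n) : X ⊕ Quot (relYZ rY lZ)))
      (fun n : N =>
        (Sum.inr (Quot.mk (relYZ rY lZ) (Sum.inl (lY n))) : X ⊕ Quot (relYZ rY lZ)))
      (r := relXQ rX lY rY lZ) (fun a b => Iff.rfl) (psiR rX lY rY lZ u)
    have e2 : Nat.card {w : X ⊕ Quot (relYZ rY lZ) //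
          Sum.elim (fun x => Quot.mk (relT rX lY rY lZ) (Sum.inl x))
            (toTYZ rX lY rY lZ) w = u}
        = Nat.card {w : X ⊕ Quot (relYZ rY lZ) //
            Quot.mk (relXQ rX lY rY lZ) w = psiR rX lY rY lZ u} := by
      refine Nat.card_congr (Equiv.subtypeEquivRight fun w => ⟨fun h => ?_, fun h => ?_⟩)
      · exact (psiR_phiR rX lY rY lZ (Quot.mk _ w)).symm.trans
          (congrArg (psiR rX lY rY lZ) h)
      · exact (congrArg (phiR rX lY rY lZ) h).trans (phiR_psiR rX lY rY lZ u)
    have e3 : Nat.card {n : N //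
          Quot.mk (relXQ rX lY rY lZ) (Sum.inl (rX n)) = psiR rX lY rY lZ u}
        = Nat.card {n : N // Quot.mk (relT rX lY rY lZ) (Sum.inl (rX n)) = u} := by
      refine Nat.card_congr (Equiv.subtypeEquivRight fun n => ⟨fun h => ?_, fun h => ?_⟩)
      · exact (congrArg (phiR rX lY rY lZ) h).trans (phiR_psiR rX lY rY lZ u)
      · exact congrArg (psiR rX lY rY lZ) h
    rw [← e3, ← hXQsplit, e2]
    exact key
  have hsum1 : (∑ᶠ w : {w : Quot (relYZ rY lZ) // toTYZ rX lY rY lZ w = u}, b1YZ rY lZ w.1)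
      = (∑ w : {w : Quot (relYZ rY lZ) // toTYZ rX lY rY lZ w = u},
          (Nat.card {l : L // Quot.mk (relYZ rY lZ) (Sum.inl (rY l)) = w.1} + 1))
        - ∑ w : {w : Quot (relYZ rY lZ) // toTYZ rX lY rY lZ w = u},
            Nat.card {p : Y ⊕ Z // Quot.mk (relYZ rY lZ) p = w.1} := by
    rw [finsum_eq_sum_of_fintype, ← Finset.sum_tsub_distrib _ (fun w _ => hcle w)]
    exact Finset.sum_congr rfl fun w _ => rfl
  have hsplitB : (∑ w : {w : Quot (relYZ rY lZ) // toTYZ rX lY rY lZ w = u},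
        (Nat.card {l : L // Quot.mk (relYZ rY lZ) (Sum.inl (rY l)) = w.1} + 1))
      = (∑ w : {w : Quot (relYZ rY lZ) // toTYZ rX lY rY lZ w = u},
          Nat.card {l : L // Quot.mk (relYZ rY lZ) (Sum.inl (rY l)) = w.1})
        + Nat.card {w : Quot (relYZ rY lZ) // toTYZ rX lY rY lZ w = u} := by
    rw [Finset.sum_add_distrib, Finset.sum_const, smul_eq_mul, mul_one, Finset.card_univ,
      Nat.card_eq_fintype_card]
  have hle2 : (∑ w : {w : Quot (relYZ rY lZ) // toTYZ rX lY rY lZ w = u},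
        Nat.card {p : Y ⊕ Z // Quot.mk (relYZ rY lZ) p = w.1})
      ≤ ∑ w : {w : Quot (relYZ rY lZ) // toTYZ rX lY rY lZ w = u},
          (Nat.card {l : L // Quot.mk (relYZ rY lZ) (Sum.inl (rY l)) = w.1} + 1) :=
    Finset.sum_le_sum (fun w _ => hcle w)
  rw [hb1R]
  rw [hsum1]
  rw [htotal]
  rw [hglue]
  rw [hBpart]
  rw [hsplitB]
  rw [hsplitB] at hle2
  rw [hWsplit] at hW
  omega

/-- Statement 1: for every point `[u]` of the iterated pushout `X ⊔_N Y ⊔_L Z`,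
`b₁([u]; X ⊔_N Y, Z) + Σ_{[v] ↦ [u]} b₁([v]; X, Y)
  = |(N ⊔ L)-fibre of [u]| − |(X ⊔ Y ⊔ Z)-fibre of [u]| + 1`,
and likewise for `b₁([u]; X, Y ⊔_L Z) + Σ_{[w] ↦ [u]} b₁([w]; Y, Z)`;
in particular, for labels valued in an abelian monoid, the two iterated weighted
compositions carry the same labels. -/
theorem statement1 {Mo : Type} [AddCommMonoid Mo] (α : Mo)
    (labX : X → Mo) (labY : Y → Mo) (labZ : Z → Mo)
    (u : Quot (relT rX lY rY lZ)) :
    (b1XY_Z rX lY rY lZ u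
        + ∑ᶠ v : {v : Quot (relXY rX lY) // toTXY rX lY rY lZ v = u}, b1XY rX lY v.1
      = (glueCount rX lY rY lZ u + 1) - totalCount rX lY rY lZ u) ∧
    (b1X_YZ rX lY rY lZ u
        + ∑ᶠ w : {w : Quot (relYZ rY lZ) // toTYZ rX lY rY lZ w = u}, b1YZ rY lZ w.1
      = (glueCount rX lY rY lZ u + 1) - totalCount rX lY rY lZ u) ∧
    compLabLeft rX lY rY lZ α labX labY labZ u
      = compLabRight rX lY rY lZ α labX labY labZ u := by
  classical
  refine ⟨part1 rX lY rY lZ u, part2 rX lY rY lZ u, ?_⟩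
  letI : Fintype {v : Quot (relXY rX lY) // toTXY rX lY rY lZ v = u} := Fintype.ofFinite _
  letI : Fintype {w : Quot (relYZ rY lZ) // toTYZ rX lY rY lZ w = u} := Fintype.ofFinite _
  have key1 := part1 rX lY rY lZ u
  have key2 := part2 rX lY rY lZ u
  have hfin1 : (∑ᶠ v : {v : Quot (relXY rX lY) // toTXY rX lY rY lZ v = u}, b1XY rX lY v.1)
      = ∑ v : {v : Quot (relXY rX lY) // toTXY rX lY rY lZ v = u}, b1XY rX lY v.1 :=
    finsum_eq_sum_of_fintype _
  have hfin2 : (∑ᶠ w : {w : Quot (relYZ rY lZ) // toTYZ rX lY rY lZ w = u}, b1YZ rY lZ w.1)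
      = ∑ w : {w : Quot (relYZ rY lZ) // toTYZ rX lY rY lZ w = u}, b1YZ rY lZ w.1 :=
    finsum_eq_sum_of_fintype _
  have hsx : (∑ v : {v : Quot (relXY rX lY) // toTXY rX lY rY lZ v = u},
        ∑ᶠ x : {x : X // Quot.mk (relXY rX lY) (Sum.inl x) = v.1}, labX x.1)
      = ∑ᶠ x : {x : X // Quot.mk (relT rX lY rY lZ) (Sum.inl x) = u}, labX x.1 :=
    sum_fiber_sum (fun x : X => Quot.mk (relXY rX lY) (Sum.inl x)) (toTXY rX lY rY lZ) u labX
  have hsy : (∑ v : {v : Quot (relXY rX lY) // toTXY rX lY rY lZ v = u},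
        ∑ᶠ y : {y : Y // Quot.mk (relXY rX lY) (Sum.inr y) = v.1}, labY y.1)
      = ∑ᶠ y : {y : Y // Quot.mk (relT rX lY rY lZ) (Sum.inr (Sum.inl y)) = u}, labY y.1 :=
    sum_fiber_sum (fun y : Y => Quot.mk (relXY rX lY) (Sum.inr y)) (toTXY rX lY rY lZ) u labY
  have hsy' : (∑ w : {w : Quot (relYZ rY lZ) // toTYZ rX lY rY lZ w = u},
        ∑ᶠ y : {y : Y // Quot.mk (relYZ rY lZ) (Sum.inl y) = w.1}, labY y.1)
      = ∑ᶠ y : {y : Y // Quot.mk (relT rX lY rY lZ) (Sum.inr (Sum.inl y)) = u}, labY y.1 :=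
    sum_fiber_sum (fun y : Y => Quot.mk (relYZ rY lZ) (Sum.inl y)) (toTYZ rX lY rY lZ) u labY
  have hsz' : (∑ w : {w : Quot (relYZ rY lZ) // toTYZ rX lY rY lZ w = u},
        ∑ᶠ z : {z : Z // Quot.mk (relYZ rY lZ) (Sum.inr z) = w.1}, labZ z.1)
      = ∑ᶠ z : {z : Z // Quot.mk (relT rX lY rY lZ) (Sum.inr (Sum.inr z)) = u}, labZ z.1 :=
    sum_fiber_sum (fun z : Z => Quot.mk (relYZ rY lZ) (Sum.inr z)) (toTYZ rX lY rY lZ) u labZ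
  have hLeft : compLabLeft rX lY rY lZ α labX labY labZ u
      = (∑ᶠ x : {x : X // Quot.mk (relT rX lY rY lZ) (Sum.inl x) = u}, labX x.1)
        + (∑ᶠ y : {y : Y // Quot.mk (relT rX lY rY lZ) (Sum.inr (Sum.inl y)) = u}, labY y.1)
        + (∑ᶠ z : {z : Z // Quot.mk (relT rX lY rY lZ) (Sum.inr (Sum.inr z)) = u}, labZ z.1)
        + ((glueCount rX lY rY lZ u + 1) - totalCount rX lY rY lZ u) • α := by
    show (∑ᶠ v : {v : Quot (relXY rX lY) // toTXY rX lY rY lZ v = u},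
          ((∑ᶠ x : {x : X // Quot.mk (relXY rX lY) (Sum.inl x) = v.1}, labX x.1)
            + (∑ᶠ y : {y : Y // Quot.mk (relXY rX lY) (Sum.inr y) = v.1}, labY y.1)
            + b1XY rX lY v.1 • α))
        + (∑ᶠ z : {z : Z // Quot.mk (relT rX lY rY lZ) (Sum.inr (Sum.inr z)) = u}, labZ z.1)
        + b1XY_Z rX lY rY lZ u • α = _
    have hconv : (∑ᶠ v : {v : Quot (relXY rX lY) // toTXY rX lY rY lZ v = u},
          ((∑ᶠ x : {x : X // Quot.mk (relXY rX lY) (Sum.inl x) = v.1}, labX x.1)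
            + (∑ᶠ y : {y : Y // Quot.mk (relXY rX lY) (Sum.inr y) = v.1}, labY y.1)
            + b1XY rX lY v.1 • α))
        = ∑ v : {v : Quot (relXY rX lY) // toTXY rX lY rY lZ v = u},
          ((∑ᶠ x : {x : X // Quot.mk (relXY rX lY) (Sum.inl x) = v.1}, labX x.1)
            + (∑ᶠ y : {y : Y // Quot.mk (relXY rX lY) (Sum.inr y) = v.1}, labY y.1)
            + b1XY rX lY v.1 • α) := finsum_eq_sum_of_fintype _
    rw [hconv, Finset.sum_add_distrib, Finset.sum_add_distrib,
      ← Finset.sum_smul, hsx, hsy, ← key1, hfin1, add_nsmul]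
    abel
  have hRight : compLabRight rX lY rY lZ α labX labY labZ u
      = (∑ᶠ x : {x : X // Quot.mk (relT rX lY rY lZ) (Sum.inl x) = u}, labX x.1)
        + (∑ᶠ y : {y : Y // Quot.mk (relT rX lY rY lZ) (Sum.inr (Sum.inl y)) = u}, labY y.1)
        + (∑ᶠ z : {z : Z // Quot.mk (relT rX lY rY lZ) (Sum.inr (Sum.inr z)) = u}, labZ z.1)
        + ((glueCount rX lY rY lZ u + 1) - totalCount rX lY rY lZ u) • α := by
    show (∑ᶠ x : {x : X // Quot.mk (relT rX lY rY lZ) (Sum.inl x) = u}, labX x.1)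
        + (∑ᶠ w : {w : Quot (relYZ rY lZ) // toTYZ rX lY rY lZ w = u},
          ((∑ᶠ y : {y : Y // Quot.mk (relYZ rY lZ) (Sum.inl y) = w.1}, labY y.1)
            + (∑ᶠ z : {z : Z // Quot.mk (relYZ rY lZ) (Sum.inr z) = w.1}, labZ z.1)
            + b1YZ rY lZ w.1 • α))
        + b1X_YZ rX lY rY lZ u • α = _
    have hconv : (∑ᶠ w : {w : Quot (relYZ rY lZ) // toTYZ rX lY rY lZ w = u},
          ((∑ᶠ y : {y : Y // Quot.mk (relYZ rY lZ) (Sum.inl y) = w.1}, labY y.1)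
            + (∑ᶠ z : {z : Z // Quot.mk (relYZ rY lZ) (Sum.inr z) = w.1}, labZ z.1)
            + b1YZ rY lZ w.1 • α))
        = ∑ w : {w : Quot (relYZ rY lZ) // toTYZ rX lY rY lZ w = u},
          ((∑ᶠ y : {y : Y // Quot.mk (relYZ rY lZ) (Sum.inl y) = w.1}, labY y.1)
            + (∑ᶠ z : {z : Z // Quot.mk (relYZ rY lZ) (Sum.inr z) = w.1}, labZ z.1)
            + b1YZ rY lZ w.1 • α) := finsum_eq_sum_of_fintype _
    rw [hconv, Finset.sum_add_distrib, Finset.sum_add_distrib,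
      ← Finset.sum_smul, hsy', hsz', ← key2, hfin2, add_nsmul]
    abel
  rw [hLeft, hRight]


end Stmt1

end
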